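/- Let z : D_n → [0,∞) be concave with z ≡ 0 on ∂D_n, and for x ∈ D_n° let I(x) = {a ∈ ℝ^d : z(x+e_i) − z(x) ≤ a_i ≤ z(x) − z(x−e_i) for i = 1,…,d}. Then the closed ℓ^∞ ball {a ∈ ℝ^d : ‖a‖_∞ ≤ ‖z‖_∞/(4n)} is contained in ⋃_{x ∈ D_n°} I(x), where ‖z‖_∞ = max_{x∈D_n} z(x). -/

import Mathlib

open MeasureTheory Filter Topology
open scoped ENNReal NNReal

noncomputable section

abbrev Zd (d : ℕ) := Fin d → ℤ

/-- The `i`-th standard unit vector of `ℤ^d`. -/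
def eZ (d : ℕ) (i : Fin d) : Zd d := Pi.single i 1

/-- `V_d = {±e_1, …, ±e_d, 0}`. -/
def Vfin (d : ℕ) : Finset (Zd d) :=
  ((Finset.univ.image fun i : Fin d => eZ d i) ∪
    (Finset.univ.image fun i : Fin d => -eZ d i)) ∪ {0}

/-- `S(d)`: probability vectors indexed by `V_d` (as functions on `ℤ^d` supported on `V_d`). -/
def Sd (d : ℕ) : Set (Zd d → ℝ) :=
  {p | (∀ v, 0 ≤ p v) ∧ (∀ v ∉ Vfin d, p v = 0) ∧ ∑ v ∈ Vfin d, p v = 1}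

/-- `𝒮(d)`: environments, i.e. maps `ℤ^d → S(d)`, with the product σ-algebra. -/
abbrev Env (d : ℕ) := Zd d → Sd d

/-- The shift `τ_x` on environments. -/
def shiftE {d : ℕ} (x : Zd d) (ω : Env d) : Env d := fun y => ω (x + y)

/-- `|x|₁ = Σ_i |x_i|`. -/
def normOne {d : ℕ} (x : Zd d) : ℤ := ∑ i, |x i|

/-- The second-order difference operator `Δ_i z(x) = z(x+e_i) + z(x−e_i) − 2 z(x)`. -/
def DC (d : ℕ) (z : Zd d → ℝ) (i : Fin d) (x : Zd d) : ℝ :=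
  z (x + eZ d i) + z (x - eZ d i) - 2 * z x

/-- The discrete Monge–Ampère operator `Mz(x) = ∏_i Δ_i z(x)`. -/
def MA (d : ℕ) (z : Zd d → ℝ) (x : Zd d) : ℝ := ∏ i : Fin d, DC d z i x

/-- `z` is concave on `D_n`: for every `x ∈ D_n°` and `v ∈ {±e_1,…,±e_d}`,
`z(x+v) + z(x−v) − 2z(x) ≤ 0`. -/
def IsConcaveD (d n : ℕ) (z : Zd d → ℝ) : Prop :=
  ∀ x : Zd d, normOne x < (n : ℤ) →
    ∀ v : Zd d, (∃ i : Fin d, v = eZ d i ∨ v = -eZ d i) →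
      z (x + v) + z (x - v) - 2 * z x ≤ 0

/-- `c(ω,x) = (∏_{v ∈ V_d ∖ {0}} ω(x,v))^{1/(2d)}`. -/
def cfun (d : ℕ) (ω : Env d) (x : Zd d) : ℝ :=
  (∏ v ∈ (Vfin d).erase 0, (ω x).1 v) ^ (2 * (d : ℝ))⁻¹

/-- `ω` is elliptic: `ω(x,v) > 0` for all `x` and all `v ∈ V_d ∖ {0}`. -/
def Elliptic (d : ℕ) (ω : Env d) : Prop :=
  ∀ x : Zd d, ∀ v ∈ Vfin d, v ≠ 0 → 0 < (ω x).1 v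

/-- `ω` is balanced (env): `ω(x, e_i) = ω(x, −e_i)` for all `x` and `i`. -/
def BalancedEnv (d : ℕ) (ω : Env d) : Prop :=
  ∀ (x : Zd d) (i : Fin d), (ω x).1 (eZ d i) = (ω x).1 (-eZ d i)

/-- The class `𝒜(ω,f)`: concave `u : D_n → [0,∞)` vanishing on `∂D_n` with
`|Mu(x)|^{1/d} ≥ f(x)/c(ω,x)` on `D_n°`. -/
def memA (d n : ℕ) (ω : Env d) (f : Zd d → ℝ) (u : Zd d → ℝ) : Prop :=
  IsConcaveD d n u ∧
  (∀ x : Zd d, normOne x ≤ (n : ℤ) → 0 ≤ u x) ∧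
  (∀ x : Zd d, normOne x = (n : ℤ) → u x = 0) ∧
  ∀ x : Zd d, normOne x < (n : ℤ) → f x / cfun d ω x ≤ |MA d u x| ^ ((d : ℝ)⁻¹)

lemma abs_le_normOne {d : ℕ} (x : Zd d) (i : Fin d) : |x i| ≤ normOne x :=
  Finset.single_le_sum (f := fun j => |x j|) (fun j _ => abs_nonneg _) (Finset.mem_univ i)

lemma finite_Dn (d : ℕ) (n : ℕ) : {x : Zd d | normOne x ≤ (n : ℤ)}.Finite := by
  apply Set.Finite.subset (Set.finite_Icc (fun _ : Fin d => -(n : ℤ)) (fun _ => (n : ℤ)))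
  intro x hx
  constructor
  · intro i
    have := (abs_le.mp ((abs_le_normOne x i).trans hx)).1
    simpa using this
  · intro i
    exact (abs_le.mp ((abs_le_normOne x i).trans hx)).2

lemma normOne_add_le {d : ℕ} (x y : Zd d) : normOne (x + y) ≤ normOne x + normOne y := by
  unfold normOne
  rw [← Finset.sum_add_distrib]
  exact Finset.sum_le_sum fun i _ => abs_add_le _ _

lemma normOne_eZ (d : ℕ) (i : Fin d) : normOne (eZ d i) = 1 := by
  unfold normOne eZ
  rw [Finset.sum_eq_single i]
  · simp
  · intro j _ hj; simp [Pi.single_apply, hj]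
  · simp

lemma normOne_neg {d : ℕ} (x : Zd d) : normOne (-x) = normOne x := by
  unfold normOne; simp

lemma sum_mul_eZ {d : ℕ} (a : Fin d → ℝ) (i : Fin d) :
    ∑ j, a j * ((eZ d i j : ℤ) : ℝ) = a i := by
  rw [Finset.sum_eq_single i]
  · simp [eZ]
  · intro j _ hj; simp [eZ, Pi.single_apply, hj]
  · simp

/-- The ℓ^∞ ball of radius `‖z‖_∞/(4n)` is covered by the boxes `I(x)`, `x ∈ D_n°`. -/
theorem stmt10 (d n : ℕ) (hd : 1 ≤ d) (hn : 1 ≤ n)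
    (z : Zd d → ℝ) (hconc : IsConcaveD d n z)
    (hnonneg : ∀ x : Zd d, normOne x ≤ (n : ℤ) → 0 ≤ z x)
    (hbd : ∀ x : Zd d, normOne x = (n : ℤ) → z x = 0)
    (a : Fin d → ℝ)
    (ha : ∀ i : Fin d, |a i| ≤ sSup (z '' {x : Zd d | normOne x ≤ (n : ℤ)}) / (4 * n)) :
    ∃ x : Zd d, normOne x < (n : ℤ) ∧
      ∀ i : Fin d, z (x + eZ d i) - z x ≤ a i ∧ a i ≤ z x - z (x - eZ d i) := by
  classical
  set S : Set (Zd d) := {x : Zd d | normOne x ≤ (n : ℤ)} with hS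
  have hSfin : S.Finite := finite_Dn d n
  have h0S : (0 : Zd d) ∈ S := by simp [hS, normOne]
  have hSne : S.Nonempty := ⟨0, h0S⟩
  set M : ℝ := sSup (z '' S) with hM
  have hbdd : BddAbove (z '' S) := (hSfin.image z).bddAbove
  have hzleM : ∀ x ∈ S, z x ≤ M := fun x hx => le_csSup hbdd ⟨x, hx, rfl⟩
  have hM0 : 0 ≤ M := le_trans (hnonneg 0 h0S) (hzleM 0 h0S)
  have hnR : (0 : ℝ) < (n : ℝ) := by exact_mod_cast hn
  -- bound on linear part
  have hlin : ∀ x ∈ S, |∑ i, a i * ((x i : ℤ) : ℝ)| ≤ M / 4 := by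
    intro x hx
    calc |∑ i, a i * ((x i : ℤ) : ℝ)| ≤ ∑ i, |a i * ((x i : ℤ) : ℝ)| :=
          Finset.abs_sum_le_sum_abs _ _
      _ ≤ ∑ i, (M / (4 * n)) * |((x i : ℤ) : ℝ)| := by
          apply Finset.sum_le_sum
          intro i _
          rw [abs_mul]
          exact mul_le_mul_of_nonneg_right (ha i) (abs_nonneg _)
      _ = (M / (4 * n)) * ((normOne x : ℤ) : ℝ) := by
          rw [← Finset.mul_sum]
          congr 1
          unfold normOne
          push_cast
          rfl
      _ ≤ (M / (4 * n)) * (n : ℝ) := by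
          apply mul_le_mul_of_nonneg_left
          · exact_mod_cast hx
          · positivity
      _ = M / 4 := by field_simp
  rcases eq_or_lt_of_le hM0 with hMz | hMpos
  · -- M = 0 : z ≡ 0 on D_n and a = 0
    have hz0 : ∀ x ∈ S, z x = 0 := fun x hx =>
      le_antisymm (by rw [← hMz] at hzleM; exact hzleM x hx) (hnonneg x hx)
    have ha0 : ∀ i, a i = 0 := by
      intro i
      have h := ha i
      rw [← hMz] at h
      simp only [zero_div] at h
      exact abs_eq_zero.mp (le_antisymm h (abs_nonneg _))
    refine ⟨0, by simpa [normOne] using (show 0 < n by omega), fun i => ?_⟩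
    have h1 : normOne (0 + eZ d i) ≤ (n : ℤ) := by
      rw [zero_add, normOne_eZ]; exact_mod_cast hn
    have h2 : normOne (0 - eZ d i) ≤ (n : ℤ) := by
      rw [zero_sub, normOne_neg, normOne_eZ]; exact_mod_cast hn
    rw [hz0 _ h1, hz0 _ h2, hz0 0 h0S, ha0 i]
    norm_num
  · -- M > 0 : take a maximizer of z(y) - a·y over D_n
    set g : Zd d → ℝ := fun y => z y - ∑ i, a i * ((y i : ℤ) : ℝ) with hg
    obtain ⟨x₀, hx₀S, hx₀max⟩ := hSfin.toFinset.exists_max_image g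
      (by rw [Set.Finite.toFinset_nonempty]; exact hSne)
    rw [Set.Finite.mem_toFinset] at hx₀S
    have hx₀max' : ∀ y ∈ S, g y ≤ g x₀ := fun y hy =>
      hx₀max y (hSfin.mem_toFinset.mpr hy)
    -- the max of z is attained
    obtain ⟨x₁, hx₁S, hx₁⟩ : ∃ x₁ ∈ S, z x₁ = M := by
      have : M ∈ z '' S := (Set.Nonempty.csSup_mem (hSne.image z) (hSfin.image z))
      obtain ⟨x₁, h1, h2⟩ := this
      exact ⟨x₁, h1, h2⟩
    have hgx₁ : 3 * M / 4 ≤ g x₁ := by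
      have := hlin x₁ hx₁S
      have := neg_abs_le (∑ i, a i * ((x₁ i : ℤ) : ℝ))
      simp only [hg]
      rw [hx₁]
      nlinarith [hlin x₁ hx₁S, neg_abs_le (∑ i, a i * ((x₁ i : ℤ) : ℝ)),
        le_abs_self (∑ i, a i * ((x₁ i : ℤ) : ℝ))]
    have hx₀lt : normOne x₀ < (n : ℤ) := by
      rcases lt_or_eq_of_le (show normOne x₀ ≤ (n : ℤ) from hx₀S) with h | h
      · exact h
      · exfalso
        have hz0 : z x₀ = 0 := hbd x₀ h
        have hbx : g x₀ ≤ M / 4 := by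
          simp only [hg]
          rw [hz0]
          have := le_abs_self (∑ i, a i * ((x₀ i : ℤ) : ℝ))
          have := neg_abs_le (∑ i, a i * ((x₀ i : ℤ) : ℝ))
          nlinarith [hlin x₀ hx₀S]
        have hcx := hx₀max' x₁ hx₁S
        have e1 : (3:ℝ) * M / 4 ≤ g x₀ := le_trans hgx₁ hcx
        have : (3:ℝ) * M / 4 ≤ M / 4 := le_trans e1 hbx
        linarith
    refine ⟨x₀, hx₀lt, fun i => ?_⟩
    have hplus : x₀ + eZ d i ∈ S := by
      have := normOne_add_le x₀ (eZ d i)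
      rw [normOne_eZ] at this
      simp only [hS, Set.mem_setOf_eq]
      omega
    have hminus : x₀ - eZ d i ∈ S := by
      have := normOne_add_le x₀ (-eZ d i)
      rw [normOne_neg, normOne_eZ] at this
      simp only [hS, Set.mem_setOf_eq]
      rw [sub_eq_add_neg]
      omega
    have hsum_plus : ∑ j, a j * (((x₀ + eZ d i) j : ℤ) : ℝ)
        = (∑ j, a j * ((x₀ j : ℤ) : ℝ)) + a i := by
      have : ∀ j, a j * (((x₀ + eZ d i) j : ℤ) : ℝ)
          = a j * ((x₀ j : ℤ) : ℝ) + a j * ((eZ d i j : ℤ) : ℝ) := by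
        intro j; simp [Pi.add_apply]; push_cast; ring
      rw [Finset.sum_congr rfl fun j _ => this j, Finset.sum_add_distrib, sum_mul_eZ]
    have hsum_minus : ∑ j, a j * (((x₀ - eZ d i) j : ℤ) : ℝ)
        = (∑ j, a j * ((x₀ j : ℤ) : ℝ)) - a i := by
      have : ∀ j, a j * (((x₀ - eZ d i) j : ℤ) : ℝ)
          = a j * ((x₀ j : ℤ) : ℝ) - a j * ((eZ d i j : ℤ) : ℝ) := by
        intro j; simp [Pi.sub_apply]; push_cast; ring
      rw [Finset.sum_congr rfl fun j _ => this j, Finset.sum_sub_distrib, sum_mul_eZ]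
    have h1 := hx₀max' _ hplus
    have h2 := hx₀max' _ hminus
    simp only [hg] at h1 h2
    rw [hsum_plus] at h1
    rw [hsum_minus] at h2
    constructor <;> linarith
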